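/- arXiv:2304.07439 — 2 statements merged into one kernel-verified Lean document; each statement's English description precedes it below -/
import Mathlib

section
/- With G_n and the power-sum multiplication operators p_n on Γ, and G*_m the adjoint components defined via G*(z) = exp(∑_{n odd} (2(t^n−1)/n) p_n z^n) exp(∑_{n odd} (∂/∂p_n) z^{-n}) = ∑ G*_n z^{-n}, one has the commutation relations G*_m p_n = G*_{m−n} + p_n G*_m and p*_m G_n = G_{n−m} + G_n p*_m for all m, and n odd, where p*_m = (m/2)·∂/∂p_m. -/
open MvPolynomial Finset

noncomputable section
open scoped Classical

/-- Index set of odd positive integers (odd power sums). -/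
abbrev OddIdx := {n : ℕ // Odd n}

/-- The ring Γ = F[p₁, p₃, p₅, …]. -/
abbrev Gam (F : Type) [Field F] := MvPolynomial OddIdx F

variable {F : Type} [Field F] [CharZero F]

/-- The power sum p_n (a variable for odd n, 0 otherwise). -/
def pvar (F : Type) [Field F] (n : ℕ) : Gam F := if h : Odd n then X ⟨n, h⟩ else 0

/-- p_ρ = ∏ p_{ρᵢ}. -/
def pprod (F : Type) [Field F] (ρ : Multiset ℕ) : Gam F := (ρ.map (pvar F)).prod

/-- ∂/∂p_n. -/
def pder (n : ℕ) (f : Gam F) : Gam F := if h : Odd n then pderiv (⟨n, h⟩ : OddIdx) f else 0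

/-- Composition of partial derivatives indexed by a multiset. -/
def Dmult (ρ : Multiset ℕ) (f : Gam F) : Gam F := ρ.toList.foldr pder f

/-- ∏ᵢ mᵢ(ρ)!. -/
def aut (ρ : Multiset ℕ) : ℕ := ρ.toFinset.prod fun i => Nat.factorial (ρ.count i)

/-- z_ρ = ∏ᵢ i^{mᵢ(ρ)} mᵢ(ρ)!. -/
def zp (ρ : Multiset ℕ) : ℕ := ρ.prod * aut ρ

/-- Coefficient of z^m in exp(∑ₙ c_n p_n zⁿ). -/
def crea (c : ℕ → F) (m : ℤ) : Gam F :=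
  if 0 ≤ m then
    ∑ ρ : Nat.Partition m.toNat, (((ρ.parts.map c).prod) / (aut ρ.parts : F)) • pprod F ρ.parts
  else 0

/-- Coefficient of z^{-k} in exp(∑ₙ d_n (∂/∂p_n) z^{-n}), applied to f. -/
def annih (d : ℕ → F) (k : ℕ) (f : Gam F) : Gam F :=
  ∑ ρ : Nat.Partition k, (((ρ.parts.map d).prod) / (aut ρ.parts : F)) • Dmult ρ.parts f

/-- A bound beyond which all annihilation components kill f. -/
def bnd (f : Gam F) : ℕ := (f.totalDegree + 1) * ((f.vars.sup fun v => v.1) + 1) + 1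

/-- Coefficient of z^m in exp(∑ c_n p_n zⁿ)·exp(∑ d_n ∂/∂p_n z^{-n}), applied to f. -/
def vop (c d : ℕ → F) (m : ℤ) (f : Gam F) : Gam F :=
  ∑ k ∈ Finset.range (bnd f), crea c (m + k) * annih d k f

/-- c_n = 2/n for odd n: the creation coefficients for Schur's Q-functions. -/
def cQ (F : Type) [Field F] : ℕ → F := fun n => if Odd n then 2 / (n : F) else 0

/-- d_n = -1 for odd n: annihilation coefficients of Q(z). -/
def dQ (F : Type) [Field F] : ℕ → F := fun n => if Odd n then (-1 : F) else 0

/-- The component Q_m of the vertex operator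
  Q(z) = exp(∑_{n odd} (2/n) pₙ zⁿ) exp(-∑_{n odd} (∂/∂pₙ) z^{-n}). -/
def Qop (m : ℤ) (f : Gam F) : Gam F := vop (cQ F) (dQ F) m f

/-- The one-row Schur Q-function q_m (with q_m = 0 for m < 0, q₀ = 1). -/
def qel (F : Type) [Field F] [CharZero F] (m : ℤ) : Gam F := crea (cQ F) m

/-- Q_λ·1 = Q_{λ₁}⋯Q_{λ_l}·1. -/
def Qelem (F : Type) [Field F] [CharZero F] (l : List ℕ) : Gam F :=
  l.foldr (fun a g => Qop (a : ℤ) g) 1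

/-- The bilinear form on Γ with ⟨p_λ, p_μ⟩ = 2^{-ℓ(λ)} δ_{λμ} z_λ. -/
def formQ (f g : Gam F) : F :=
  ∑ m ∈ f.support, f.coeff m * g.coeff m *
    ((m.prod fun i k => (i.1 : F) ^ k * (Nat.factorial k : F)) / 2 ^ (m.sum fun _ k => k))

end

noncomputable section
open scoped Classical

/-- The coefficient field ℚ(t). -/
abbrev FF := RatFunc ℚ

instance : CharZero FF :=
  charZero_of_injective_algebraMap (RatFunc.algebraMap_injective ℚ)

/-- The parameter t. -/
def tt : FF := RatFunc.X

/-- Annihilation coefficients d_n = tⁿ - 1 (n odd) of G(z). -/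
def dG : ℕ → FF := fun n => if Odd n then tt ^ n - 1 else 0

/-- Creation coefficients 2(tⁿ-1)/n (n odd) of G*(z). -/
def cGs : ℕ → FF := fun n => if Odd n then 2 * (tt ^ n - 1) / (n : FF) else 0

/-- Annihilation coefficients d_n = 1 (n odd) of G*(z). -/
def dGs : ℕ → FF := fun n => if Odd n then (1 : FF) else 0

/-- The component G_m of G(z) = exp(∑(2/n)pₙzⁿ)exp(∑(tⁿ-1)(∂/∂pₙ)z^{-n}). -/
def Gop (m : ℤ) (f : Gam FF) : Gam FF := vop (cQ FF) dG m f

/-- The component G*_m (coefficient of z^{-m}) of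
  G*(z) = exp(∑(2(tⁿ-1)/n)pₙzⁿ)exp(∑(∂/∂pₙ)z^{-n}). -/
def Gstar (m : ℤ) (f : Gam FF) : Gam FF := vop cGs dGs (-m) f

/-- G_λ·1 for a list of nonnegative parts. -/
def Gelem (l : List ℕ) : Gam FF := l.foldr (fun a g => Gop (a : ℤ) g) 1

/-- G_λ·1 for a list of integer indices. -/
def GelemZ (l : List ℤ) : Gam FF := l.foldr (fun a g => Gop a g) 1

/-- The Q-Kostka polynomial L_{λμ}(t) = 2^{-ℓ(λ)}⟨G_μ·1, Q_λ·1⟩. -/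
def Lpoly (l m : List ℕ) : FF := formQ (Gelem m) (Qelem FF l) / 2 ^ l.length

/-- The spin Green polynomial Y^λ_μ(t) = ⟨G_λ(x;t), p_μ⟩. -/
def Ypoly (l : List ℕ) (M : Multiset ℕ) : FF := formQ (Gelem l) (pprod FF M)

/-- z_ρ(t) = z_ρ ∏ⱼ (1 - t^{ρⱼ})⁻¹. -/
def zpt (ρ : Multiset ℕ) : FF := (zp ρ : FF) / (ρ.map fun j => 1 - tt ^ j).prod

/-- The adjoint power sum operator p*_m = (m/2) ∂/∂p_m. -/
def pstar (m : ℕ) (f : Gam FF) : Gam FF := ((m : FF) / 2) • pder m f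

/-- n(λ) = ∑ᵢ (i-1)λᵢ. -/
def nstat (l : List ℕ) : ℕ := ∑ i ∈ Finset.range l.length, i * l.getD i 0

/-- Dominance order on partitions (as decreasing lists), including equal weights. -/
def domin (a b : List ℕ) : Prop := a.sum = b.sum ∧ ∀ i, (b.take i).sum ≤ (a.take i).sum

/-- The parts of a `Nat.Partition` as a decreasingly sorted list. -/
def listOf {n : ℕ} (ρ : n.Partition) : List ℕ := (ρ.parts.sort (· ≤ ·)).reverse

/-- The i-th part (1-indexed by position in list, 0 beyond the length). -/
def pt (l : List ℕ) (i : ℕ) : ℕ := l.getD i 0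

/-- ξ/ν is a horizontal strip: ν ⊆ ξ and ξ_{i+1} ≤ ν_i for all i. -/
def HStrip (ξ ν : List ℕ) : Prop := ∀ i, pt ν i ≤ pt ξ i ∧ pt ξ (i + 1) ≤ pt ν i

/-- The strip ξ/ν has a box in column c. -/
def boxcol (ξ ν : List ℕ) (c : ℕ) : Prop := ∃ i < ξ.length, pt ν i < c ∧ c ≤ pt ξ i

/-- a(ξ/ν): number of columns with a box of ξ/ν but none in the next column. -/
def acount (ξ ν : List ℕ) : ℕ :=
  ((Finset.Icc 1 (pt ξ 0)).filter fun c => boxcol ξ ν c ∧ ¬ boxcol ξ ν (c + 1)).card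

end

noncomputable section AuxProofs
open MvPolynomial
open scoped Classical
set_option linter.unusedSectionVars false

variable {F : Type} [Field F] [CharZero F]

lemma pder_add (n : ℕ) (f g : Gam F) : pder n (f + g) = pder n f + pder n g := by
  unfold pder; split <;> simp

lemma pder_smul (n : ℕ) (c : F) (f : Gam F) : pder n (c • f) = c • pder n f := by
  unfold pder; split <;> simp

lemma pder_zero (n : ℕ) : pder n (0 : Gam F) = 0 := by
  unfold pder; split <;> simp

lemma pder_sum {α : Type*} (n : ℕ) (s : Finset α) (f : α → Gam F) :
    pder n (∑ a ∈ s, f a) = ∑ a ∈ s, pder n (f a) := by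
  unfold pder; split <;> simp

lemma pder_mul (n : ℕ) (f g : Gam F) : pder n (f * g) = pder n f * g + f * pder n g := by
  unfold pder; split
  · exact pderiv_mul
  · simp

lemma pderiv_comm' (i j : OddIdx) (f : Gam F) :
    pderiv i (pderiv j f) = pderiv j (pderiv i f) := by
  induction f using MvPolynomial.induction_on with
  | C a => simp
  | add p q hp hq => simp [hp, hq]
  | mul_X p k hp =>
    have hzero : ∀ a b : OddIdx, pderiv a (pderiv b (X k : Gam F)) = 0 := by
      intro a b
      by_cases h : k = b
      · subst h; rw [pderiv_X_self]; simp
      · rw [pderiv_X_of_ne h]; simp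
    simp only [pderiv_mul, map_add, hp, hzero]
    ring

lemma pder_comm (a b : ℕ) (f : Gam F) : pder a (pder b f) = pder b (pder a f) := by
  unfold pder
  split <;> split <;> simp [pderiv_comm']

instance : LeftCommutative (pder : ℕ → Gam F → Gam F) := ⟨fun a b f => pder_comm a b f⟩

lemma Dmult_cons (a : ℕ) (s : Multiset ℕ) (f : Gam F) :
    Dmult (a ::ₘ s) f = pder a (Dmult s f) := by
  unfold Dmult
  have h : List.Perm (a ::ₘ s).toList (a :: s.toList) := by
    rw [← Multiset.coe_eq_coe, Multiset.coe_toList, ← Multiset.cons_coe, Multiset.coe_toList]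
  rw [h.foldr_eq]
  rfl

lemma Dmult_nil (f : Gam F) : Dmult 0 f = f := by
  unfold Dmult
  simp [Multiset.toList_zero]
lemma pder_nsmul (n : ℕ) (c : ℕ) (f : Gam F) : pder n (c • f) = c • pder n f := by
  unfold pder; split <;> simp

lemma Dmult_add (s : Multiset ℕ) (f g : Gam F) :
    Dmult s (f + g) = Dmult s f + Dmult s g := by
  induction s using Multiset.induction with
  | empty => simp [Dmult_nil]
  | cons a s ih => simp [Dmult_cons, ih, pder_add]

lemma Dmult_smul (s : Multiset ℕ) (c : F) (f : Gam F) :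
    Dmult s (c • f) = c • Dmult s f := by
  induction s using Multiset.induction with
  | empty => simp [Dmult_nil]
  | cons a s ih => simp [Dmult_cons, ih, pder_smul]

lemma Dmult_zero (s : Multiset ℕ) : Dmult s (0 : Gam F) = 0 := by
  induction s using Multiset.induction with
  | empty => simp [Dmult_nil]
  | cons a s ih => simp [Dmult_cons, ih, pder_zero]

lemma pder_Dmult (m : ℕ) (s : Multiset ℕ) (f : Gam F) :
    pder m (Dmult s f) = Dmult s (pder m f) := by
  induction s using Multiset.induction with
  | empty => simp [Dmult_nil]
  | cons a s ih => rw [Dmult_cons, Dmult_cons, ← ih, pder_comm]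

lemma pprod_cons (a : ℕ) (s : Multiset ℕ) :
    pprod F (a ::ₘ s) = pvar F a * pprod F s := by
  unfold pprod; simp

lemma pder_pvar {n : ℕ} (hn : Odd n) (a : ℕ) :
    pder n (pvar F a) = if a = n then 1 else 0 := by
  unfold pder pvar
  rw [dif_pos hn]
  by_cases ha : Odd a
  · rw [dif_pos ha]
    by_cases h : a = n
    · subst h; rw [if_pos rfl, pderiv_X_self]
    · rw [if_neg h, pderiv_X_of_ne]
      intro he
      exact h (congrArg Subtype.val he)
  · have h : a ≠ n := by rintro rfl; exact ha hn
    rw [dif_neg ha, if_neg h, map_zero]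

lemma pder_pvar2 {n : ℕ} (hn : Odd n) (a : ℕ) :
    pder a (pvar F n) = if n = a then 1 else 0 := by
  unfold pder pvar
  rw [dif_pos hn]
  by_cases ha : Odd a
  · rw [dif_pos ha]
    by_cases h : n = a
    · subst h; rw [if_pos rfl, pderiv_X_self]
    · rw [if_neg h, pderiv_X_of_ne]
      intro he
      exact h (congrArg Subtype.val he)
  · have h : n ≠ a := by rintro rfl; exact ha hn
    rw [dif_neg ha, if_neg h]

lemma pder_pprod {n : ℕ} (hn : Odd n) (s : Multiset ℕ) :
    pder n (pprod F s) = s.count n • pprod F (s.erase n) := by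
  induction s using Multiset.induction with
  | empty =>
    have : pprod F 0 = 1 := by unfold pprod; simp
    rw [this]
    unfold pder
    rw [dif_pos hn]
    simp
  | cons a s ih =>
    rw [pprod_cons, pder_mul, pder_pvar hn, ih]
    by_cases h : a = n
    · subst h
      rw [if_pos rfl, Multiset.count_cons_self, Multiset.erase_cons_head, one_mul]
      rcases Nat.eq_zero_or_pos (s.count a) with hc | hc
      · simp [hc]
      · have hmem : a ∈ s := by rwa [← Multiset.count_pos]
        rw [mul_smul_comm, ← pprod_cons, Multiset.cons_erase hmem, succ_nsmul, add_comm]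
    · rw [if_neg h, zero_mul, zero_add, Multiset.count_cons_of_ne (fun he => h he.symm),
        Multiset.erase_cons_tail s h, pprod_cons, mul_smul_comm]

lemma Dmult_mul_pvar {n : ℕ} (hn : Odd n) (s : Multiset ℕ) (f : Gam F) :
    Dmult s (pvar F n * f) =
      pvar F n * Dmult s f + s.count n • Dmult (s.erase n) f := by
  induction s using Multiset.induction with
  | empty => simp [Dmult_nil]
  | cons a s ih =>
    rw [Dmult_cons, ih, pder_add, pder_mul, pder_pvar2 hn, pder_nsmul,
      ← Dmult_cons, ← Dmult_cons]
    by_cases h : n = a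
    · subst h
      rw [if_pos rfl, one_mul, Multiset.count_cons_self, Multiset.erase_cons_head]
      rcases Nat.eq_zero_or_pos (s.count n) with hc | hc
      · simp only [hc, zero_nsmul, add_zero, zero_add, one_nsmul]
        abel
      · have hmem : n ∈ s := by rwa [← Multiset.count_pos]
        rw [Multiset.cons_erase hmem, succ_nsmul]
        abel
    · have h' : a ≠ n := fun he => h he.symm
      rw [if_neg h, zero_mul, zero_add, Multiset.count_cons_of_ne h,
        Multiset.erase_cons_tail s h']
lemma aut_cons (n : ℕ) (s : Multiset ℕ) :
    aut (n ::ₘ s) = (s.count n + 1) * aut s := by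
  unfold aut
  rw [Multiset.toFinset_cons]
  by_cases h : n ∈ s.toFinset
  · rw [Finset.insert_eq_self.2 h]
    rw [← Finset.mul_prod_erase _ _ h, ← Finset.mul_prod_erase _ _ h,
      Multiset.count_cons_self, Nat.factorial_succ, mul_assoc]
    have hpr : ∏ x ∈ s.toFinset.erase n, (Multiset.count x (n ::ₘ s)).factorial
        = ∏ x ∈ s.toFinset.erase n, (Multiset.count x s).factorial :=
      Finset.prod_congr rfl fun i hi => by
        rw [Multiset.count_cons_of_ne (Finset.ne_of_mem_erase hi)]
    rw [hpr]
  · have hc : s.count n = 0 := by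
      rw [Multiset.count_eq_zero]
      exact fun hmem => h (Multiset.mem_toFinset.2 hmem)
    rw [Finset.prod_insert h, Multiset.count_cons_self, hc]
    simp only [Nat.factorial_one, zero_add, one_mul]
    apply Finset.prod_congr rfl
    intro i hi
    have : i ≠ n := by
      rintro rfl; exact h hi
    rw [Multiset.count_cons_of_ne this]

lemma part_mem_le {k : ℕ} (ρ : Nat.Partition k) {n : ℕ} (h : n ∈ ρ.parts) : n ≤ k := by
  have h1 : ρ.parts.sum = n + (ρ.parts.erase n).sum := by
    rw [← Multiset.sum_cons, Multiset.cons_erase h]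
  have h2 := ρ.parts_sum
  omega

/-- Transfer a sum over partitions of `k` with a distinguished part `n`
to a sum over partitions of `k - n`. -/
lemma sum_partition_cons {M : Type*} [AddCommMonoid M] (k n : ℕ) (hn : 0 < n) (hnk : n ≤ k)
    (φ : Multiset ℕ → M) (h0 : ∀ s : Multiset ℕ, n ∉ s → φ s = 0) :
    ∑ ρ : Nat.Partition k, φ ρ.parts = ∑ σ : Nat.Partition (k - n), φ (n ::ₘ σ.parts) := by
  classical
  rw [← Finset.sum_filter_of_ne (p := fun ρ : Nat.Partition k => n ∈ ρ.parts)
    (fun ρ _ hne => by by_contra hmem; exact hne (h0 _ hmem))]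
  refine Finset.sum_bij'
    (i := fun (ρ : Nat.Partition k) (hρ : ρ ∈ Finset.univ.filter fun ρ => n ∈ ρ.parts) =>
      (⟨ρ.parts.erase n,
        fun hi => ρ.parts_pos (Multiset.mem_of_mem_erase hi), by
          have hmem : n ∈ ρ.parts := (Finset.mem_filter.1 hρ).2
          have h1 := ρ.parts_sum
          have h2 : ρ.parts.sum = n + (ρ.parts.erase n).sum := by
            rw [← Multiset.sum_cons, Multiset.cons_erase hmem]
          omega⟩ : Nat.Partition (k - n)))
    (j := fun (σ : Nat.Partition (k - n)) _ =>
      (⟨n ::ₘ σ.parts, fun hi => by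
          rcases Multiset.mem_cons.1 hi with h | h
          · subst h; exact hn
          · exact σ.parts_pos h, by
          rw [Multiset.sum_cons, σ.parts_sum]; omega⟩ : Nat.Partition k))
    ?_ ?_ ?_ ?_ ?_
  · intro ρ hρ; exact Finset.mem_univ _
  · intro σ hσ
    rw [Finset.mem_filter]
    exact ⟨Finset.mem_univ _, Multiset.mem_cons_self _ _⟩
  · intro ρ hρ
    apply Nat.Partition.ext
    exact Multiset.cons_erase (Finset.mem_filter.1 hρ).2
  · intro σ hσ
    apply Nat.Partition.ext
    exact Multiset.erase_cons_head _ _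
  · intro ρ hρ
    rw [Multiset.cons_erase (Finset.mem_filter.1 hρ).2]
lemma odd_pos' {n : ℕ} (hn : Odd n) : 0 < n := by
  rcases hn with ⟨j, rfl⟩; omega

lemma coef_count (d : ℕ → F) (n : ℕ) (σ : Multiset ℕ) :
    ((n ::ₘ σ).map d).prod / (aut (n ::ₘ σ) : F) * (((n ::ₘ σ).count n : ℕ) : F)
      = d n * (((σ.map d).prod) / (aut σ : F)) := by
  rw [Multiset.map_cons, Multiset.prod_cons, aut_cons, Multiset.count_cons_self]
  push_cast
  have hc : ((σ.count n : F) + 1) ≠ 0 := by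
    exact_mod_cast Nat.cast_add_one_ne_zero (R := F) (σ.count n)
  rw [mul_comm ((σ.count n : F) + 1) (aut σ : F), ← div_div,
    div_mul_cancel₀ _ hc, mul_div_assoc]

lemma annih_mul_pvar (d : ℕ → F) (k : ℕ) {n : ℕ} (hn : Odd n) (f : Gam F) :
    annih d k (pvar F n * f) = pvar F n * annih d k f
      + (if n ≤ k then d n • annih d (k - n) f else 0) := by
  have hn0 : 0 < n := odd_pos' hn
  unfold annih
  have hterm : ∀ ρ : Nat.Partition k,
      ((ρ.parts.map d).prod / (aut ρ.parts : F)) • Dmult ρ.parts (pvar F n * f)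
      = pvar F n * (((ρ.parts.map d).prod / (aut ρ.parts : F)) • Dmult ρ.parts f)
        + ((ρ.parts.map d).prod / (aut ρ.parts : F) * ((ρ.parts.count n : ℕ) : F)) •
            Dmult (ρ.parts.erase n) f := by
    intro ρ
    rw [Dmult_mul_pvar hn, smul_add, mul_smul_comm]
    congr 1
    rw [← Nat.cast_smul_eq_nsmul F, smul_smul]
  rw [Finset.sum_congr rfl (fun ρ _ => hterm ρ), Finset.sum_add_distrib, ← Finset.mul_sum]
  congr 1
  by_cases hnk : n ≤ k
  · rw [if_pos hnk]
    rw [sum_partition_cons k n hn0 hnk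
      (φ := fun s => (((s.map d).prod) / (aut s : F) * ((s.count n : ℕ) : F)) • Dmult (s.erase n) f)
      (h0 := fun s hs => by simp [Multiset.count_eq_zero.2 hs])]
    rw [Finset.smul_sum]
    apply Finset.sum_congr rfl
    intro σ _
    rw [Multiset.erase_cons_head, coef_count, mul_smul]
  · rw [if_neg hnk]
    apply Finset.sum_eq_zero
    intro ρ _
    have hc : ρ.parts.count n = 0 :=
      Multiset.count_eq_zero.2 (fun hmem => hnk (part_mem_le ρ hmem))
    rw [hc]
    simp

lemma pder_crea {n : ℕ} (hn : Odd n) (c : ℕ → F) (m : ℤ) :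
    pder n (crea c m) = c n • crea c (m - n) := by
  have hn0 : 0 < n := odd_pos' hn
  unfold crea
  by_cases h0 : 0 ≤ m
  · rw [if_pos h0, pder_sum]
    have hterm : ∀ ρ : Nat.Partition m.toNat,
        pder n ((((ρ.parts.map c).prod) / (aut ρ.parts : F)) • pprod F ρ.parts)
        = ((((ρ.parts.map c).prod) / (aut ρ.parts : F)) * ((ρ.parts.count n : ℕ) : F)) •
            pprod F (ρ.parts.erase n) := by
      intro ρ
      rw [pder_smul, pder_pprod hn, ← Nat.cast_smul_eq_nsmul F, smul_smul]
    rw [Finset.sum_congr rfl (fun ρ _ => hterm ρ)]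
    by_cases h1 : (n : ℤ) ≤ m
    · have h2 : (0:ℤ) ≤ m - n := by omega
      have h3 : (m - n).toNat = m.toNat - n := by omega
      have h4 : n ≤ m.toNat := by omega
      rw [if_pos h2, h3]
      rw [sum_partition_cons m.toNat n hn0 h4
        (φ := fun s => (((s.map c).prod) / (aut s : F) * ((s.count n : ℕ) : F)) •
          pprod F (s.erase n))
        (h0 := fun s hs => by simp [Multiset.count_eq_zero.2 hs])]
      rw [Finset.smul_sum]
      apply Finset.sum_congr rfl
      intro σ _
      rw [Multiset.erase_cons_head, coef_count, mul_smul]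
    · rw [if_neg (by omega), smul_zero]
      apply Finset.sum_eq_zero
      intro ρ _
      have hc : ρ.parts.count n = 0 := by
        apply Multiset.count_eq_zero.2
        intro hmem
        have := part_mem_le ρ hmem
        omega
      rw [hc]
      simp
  · rw [if_neg h0, if_neg (by omega), pder_zero, smul_zero]

lemma annih_smul (d : ℕ → F) (k : ℕ) (c : F) (f : Gam F) :
    annih d k (c • f) = c • annih d k f := by
  unfold annih
  rw [Finset.smul_sum]
  exact Finset.sum_congr rfl fun ρ _ => by rw [Dmult_smul, smul_comm]

lemma pder_annih (m : ℕ) (d : ℕ → F) (k : ℕ) (f : Gam F) :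
    pder m (annih d k f) = annih d k (pder m f) := by
  unfold annih
  rw [pder_sum]
  exact Finset.sum_congr rfl fun ρ _ => by rw [pder_smul, pder_Dmult]
/-- Weight of a monomial exponent: sum of (variable index) × (exponent). -/
def wtm (s : OddIdx →₀ ℕ) : ℕ := s.sum fun v k => v.1 * k

/-- Weighted degree of a polynomial in Γ. -/
def Wdeg (f : Gam F) : ℕ := f.support.sup wtm

lemma wtm_add (a b : OddIdx →₀ ℕ) : wtm (a + b) = wtm a + wtm b := by
  unfold wtm
  rw [Finsupp.sum_add_index]
  · intro v _; exact mul_zero _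
  · intro v _ k₁ k₂; exact mul_add _ _ _

lemma W_pderiv (i : OddIdx) (f : Gam F) :
    ∀ s ∈ (pderiv i f).support, wtm s + i.1 ≤ Wdeg f := by
  intro s hs
  have hrw : pderiv i f
      = ∑ v ∈ f.support, MvPolynomial.monomial (v - Finsupp.single i 1)
          (MvPolynomial.coeff v f * v i) := by
    conv_lhs => rw [f.as_sum]
    rw [map_sum]
    exact Finset.sum_congr rfl fun v _ => MvPolynomial.pderiv_monomial
  rw [hrw] at hs
  obtain ⟨v, hv, hsv⟩ := Finset.mem_biUnion.1 (MvPolynomial.support_sum hs)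
  rw [MvPolynomial.support_monomial] at hsv
  by_cases hz : MvPolynomial.coeff v f * v i = 0
  · rw [if_pos hz] at hsv; exact absurd hsv (Finset.notMem_empty s)
  · rw [if_neg hz] at hsv
    rw [Finset.mem_singleton] at hsv
    subst hsv
    have hvi : 1 ≤ v i := by
      rcases Nat.eq_zero_or_pos (v i) with h | h
      · exact absurd (by rw [h]; simp) hz
      · exact h
    have hle : Finsupp.single i 1 ≤ v := by
      rw [Finsupp.single_le_iff]
      exact hvi
    have hv' : (v - Finsupp.single i 1) + Finsupp.single i 1 = v := tsub_add_cancel_of_le hle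
    have : wtm (v - Finsupp.single i 1) + wtm (Finsupp.single i 1) = wtm v := by
      rw [← wtm_add, hv']
    have hwsingle : wtm (Finsupp.single i 1) = i.1 := by
      unfold wtm
      rw [Finsupp.sum_single_index]
      · rw [mul_one]
      · exact mul_zero _
    rw [hwsingle] at this
    rw [this]
    exact Finset.le_sup hv

lemma W_pder {a : ℕ} (f : Gam F) (h : pder a f ≠ 0) :
    Wdeg (pder a f) + a ≤ Wdeg f := by
  have ha : Odd a := by
    by_contra hodd
    exact h (by unfold pder; rw [dif_neg hodd])
  have hpd : pder a f = pderiv (⟨a, ha⟩ : OddIdx) f := by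
    unfold pder; rw [dif_pos ha]
  obtain ⟨s, hs, hsup⟩ := Finset.exists_mem_eq_sup (pder a f).support
    (by rwa [Finset.nonempty_iff_ne_empty, Ne, MvPolynomial.support_eq_empty]) wtm
  rw [Wdeg, hsup]
  rw [hpd] at hs
  exact W_pderiv ⟨a, ha⟩ f s hs

lemma W_Dmult (s : Multiset ℕ) (f : Gam F) (h : Dmult s f ≠ 0) :
    Wdeg (Dmult s f) + s.sum ≤ Wdeg f := by
  induction s using Multiset.induction with
  | empty => rw [Dmult_nil] at h ⊢; simp
  | cons a s ih =>
    rw [Dmult_cons] at h ⊢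
    have hD : Dmult s f ≠ 0 := by
      intro hz
      rw [hz, pder_zero] at h
      exact h rfl
    have h1 := W_pder (Dmult s f) h
    have h2 := ih hD
    rw [Multiset.sum_cons]
    omega

lemma W_lt_bnd (f : Gam F) : Wdeg f < bnd f := by
  have hW : Wdeg f ≤ (f.vars.sup fun v => v.1) * f.totalDegree := by
    apply Finset.sup_le
    intro s hs
    have step1 : wtm s ≤ (f.vars.sup fun v => v.1) * (s.sum fun _ k => k) := by
      unfold wtm
      rw [Finsupp.sum, Finsupp.sum, Finset.mul_sum]
      apply Finset.sum_le_sum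
      intro v hv
      have hvmem : v ∈ f.vars := (MvPolynomial.mem_vars v).2 ⟨s, hs, hv⟩
      exact Nat.mul_le_mul_right _ (Finset.le_sup (f := fun v : OddIdx => v.1) hvmem)
    have step2 : (s.sum fun _ k => k) ≤ f.totalDegree := MvPolynomial.le_totalDegree hs
    calc wtm s ≤ (f.vars.sup fun v => v.1) * (s.sum fun _ k => k) := step1
      _ ≤ (f.vars.sup fun v => v.1) * f.totalDegree := Nat.mul_le_mul_left _ step2
  unfold bnd
  nlinarith [hW]

lemma annih_eq_zero (d : ℕ → F) (k : ℕ) (f : Gam F) (h : bnd f ≤ k) :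
    annih d k f = 0 := by
  unfold annih
  apply Finset.sum_eq_zero
  intro ρ _
  have hD : Dmult ρ.parts f = 0 := by
    by_contra hne
    have h1 := W_Dmult ρ.parts f hne
    have h2 := W_lt_bnd f
    rw [ρ.parts_sum] at h1
    omega
  rw [hD, smul_zero]

lemma vop_eq (c d : ℕ → F) (m : ℤ) (f : Gam F) (N : ℕ) (hN : bnd f ≤ N) :
    vop c d m f = ∑ k ∈ Finset.range N, crea c (m + k) * annih d k f := by
  unfold vop
  apply Finset.sum_subset
  · exact Finset.range_subset_range.2 hN
  · intro k _ hk
    rw [Finset.mem_range, not_lt] at hk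
    rw [annih_eq_zero d k f hk, mul_zero]
end AuxProofs

noncomputable section

theorem Gstar_p_and_pstar_G_commutation :
    (∀ (m : ℤ) (n : ℕ), Odd n → ∀ f : Gam FF,
      Gstar m (pvar FF n * f) = Gstar (m - n) f + pvar FF n * Gstar m f)
    ∧ (∀ (m : ℕ), Odd m → ∀ (n : ℤ) (f : Gam FF),
      pstar m (Gop n f) = Gop (n - m) f + Gop n (pstar m f)) := by
  constructor
  · intro m n hn f
    have hn0 : 0 < n := odd_pos' hn
    set N := bnd (pvar FF n * f) + bnd f + n with hNdef
    have h1 : bnd (pvar FF n * f) ≤ N := by omega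
    have h2 : bnd f ≤ N := by omega
    have h3 : bnd f ≤ N - n := by omega
    have hterm : ∀ k : ℕ, crea cGs (-m + k) * annih dGs k (pvar FF n * f)
        = pvar FF n * (crea cGs (-m + k) * annih dGs k f)
          + (if n ≤ k then crea cGs (-m + k) * annih dGs (k - n) f else 0) := by
      intro k
      rw [annih_mul_pvar dGs k hn f, mul_add]
      congr 1
      · ring
      · rw [mul_ite, mul_zero]
        split
        · rw [show dGs n = 1 from by simp [dGs, hn], one_smul]
        · rfl
    have e1 : (∑ k ∈ Finset.range N, pvar FF n * (crea cGs (-m + k) * annih dGs k f))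
        = pvar FF n * Gstar m f := by
      rw [← Finset.mul_sum]
      unfold Gstar
      rw [vop_eq cGs dGs (-m) f N h2]
    have e2 : (∑ k ∈ Finset.range N,
          if n ≤ k then crea cGs (-m + k) * annih dGs (k - n) f else 0)
        = Gstar (m - n) f := by
      rw [← Finset.sum_filter]
      have hfilt : (Finset.range N).filter (fun k => n ≤ k) = Finset.Ico n N := by
        ext x
        simp only [Finset.mem_filter, Finset.mem_range, Finset.mem_Ico]
        omega
      rw [hfilt, Finset.sum_Ico_eq_sum_range]
      unfold Gstar
      rw [vop_eq cGs dGs (-(m - n)) f (N - n) h3]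
      apply Finset.sum_congr rfl
      intro j _
      have harg : -m + ((n + j : ℕ) : ℤ) = -(m - (n : ℤ)) + (j : ℤ) := by push_cast; ring
      rw [harg, Nat.add_sub_cancel_left]
    calc Gstar m (pvar FF n * f)
        = ∑ k ∈ Finset.range N, crea cGs (-m + k) * annih dGs k (pvar FF n * f) := by
          unfold Gstar
          exact vop_eq cGs dGs (-m) (pvar FF n * f) N h1
      _ = ∑ k ∈ Finset.range N, (pvar FF n * (crea cGs (-m + k) * annih dGs k f)
          + (if n ≤ k then crea cGs (-m + k) * annih dGs (k - n) f else 0)) :=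
          Finset.sum_congr rfl fun k _ => hterm k
      _ = Gstar (m - n) f + pvar FF n * Gstar m f := by
          rw [Finset.sum_add_distrib, e1, e2, add_comm]
  · intro m hm n f
    have hm0 : 0 < m := odd_pos' hm
    have hmF : ((m : FF)) ≠ 0 := Nat.cast_ne_zero.2 (by omega)
    set N := max (bnd f) (bnd (pstar m f)) with hNdef
    have h1 : bnd f ≤ N := le_max_left _ _
    have h2 : bnd (pstar m f) ≤ N := le_max_right _ _
    have hcoef : ((m : FF) / 2) * (cQ FF) m = 1 := by
      simp only [cQ, if_pos hm]
      field_simp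
    have hterm : ∀ k : ℕ,
        ((m : FF) / 2) • pder m (crea (cQ FF) (n + k) * annih dG k f)
        = crea (cQ FF) ((n - m) + k) * annih dG k f
          + crea (cQ FF) (n + k) * annih dG k (pstar m f) := by
      intro k
      rw [pder_mul, smul_add]
      congr 1
      · rw [pder_crea hm (cQ FF) (n + k), smul_mul_assoc, smul_smul, hcoef, one_smul]
        congr 2
        ring
      · rw [pder_annih, ← mul_smul_comm, ← annih_smul]
        rfl
    calc pstar m (Gop n f)
        = ((m : FF) / 2) • pder m (∑ k ∈ Finset.range N, crea (cQ FF) (n + k) * annih dG k f) := by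
          unfold pstar Gop
          rw [vop_eq (cQ FF) dG n f N h1]
      _ = ∑ k ∈ Finset.range N, ((m : FF) / 2) • pder m (crea (cQ FF) (n + k) * annih dG k f) := by
          rw [pder_sum, Finset.smul_sum]
      _ = (∑ k ∈ Finset.range N, crea (cQ FF) ((n - m) + k) * annih dG k f)
          + ∑ k ∈ Finset.range N, crea (cQ FF) (n + k) * annih dG k (pstar m f) := by
          rw [← Finset.sum_add_distrib]
          exact Finset.sum_congr rfl fun k _ => hterm k
      _ = Gop (n - m) f + Gop n (pstar m f) := by
          unfold Gop
          rw [vop_eq (cQ FF) dG (n - m) f N h1, vop_eq (cQ FF) dG n (pstar m f) N h2]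

end
end

section
/- Commutation between Q-operators and q-operators: Q_m q_n = q_n Q_m − Q_{m+1} q_{n−1} − q_{n−1} Q_{m+1} for all integers m and n ≥ 1, as operators on Γ, where q_n denotes multiplication by the one-row Schur Q-function. -/
open MvPolynomial Finset

noncomputable section
open scoped Classical

set_option linter.unusedSectionVars false
namespace QqAux

variable {F : Type} [Field F] [CharZero F]

/-- closed form of the expansion coefficients of (1-x)/(1+x) -/
def Ef (j : ℕ) : ℚ := if j = 0 then 1 else 2 * (-1) ^ j

lemma pder_zero (n : ℕ) : pder n (0 : Gam F) = 0 := by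
  unfold pder; split <;> simp

lemma pder_add (n : ℕ) (f g : Gam F) : pder n (f + g) = pder n f + pder n g := by
  unfold pder; split <;> simp

lemma pder_smul (n : ℕ) (a : ℚ) (f : Gam ℚ) : pder n (a • f) = a • pder n f := by
  unfold pder; split <;> simp

lemma pder_mul (n : ℕ) (f g : Gam F) : pder n (f * g) = pder n f * g + f * pder n g := by
  unfold pder; split
  · exact pderiv_mul
  · simp

lemma pderiv_comm (i j : OddIdx) (f : Gam F) :
    pderiv i (pderiv j f) = pderiv j (pderiv i f) := by
  induction f using MvPolynomial.induction_on with
  | C a => simp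
  | add p q hp hq => simp [hp, hq]
  | mul_X p s hp =>
    have hXi : ∀ t u : OddIdx, pderiv t (pderiv u (X s : Gam F)) = 0 := by
      intro t u
      rcases eq_or_ne s u with rfl | h
      · simp
      · rw [pderiv_X_of_ne h]; simp
    simp only [pderiv_mul, map_add, pderiv_mul, hp, hXi]
    ring

lemma pder_comm (a b : ℕ) (f : Gam F) : pder a (pder b f) = pder b (pder a f) := by
  unfold pder
  split <;> split <;> simp [pderiv_comm]

instance : LeftCommutative (fun a (f : Gam F) => pder a f) :=
  ⟨fun a b f => pder_comm a b f⟩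

lemma Dmult_zero (f : Gam F) : Dmult (0 : Multiset ℕ) f = f := by
  simp [Dmult]

lemma Dmult_cons (a : ℕ) (μ : Multiset ℕ) (f : Gam F) :
    Dmult (a ::ₘ μ) f = pder a (Dmult μ f) := by
  have h : ((a ::ₘ μ).toList : Multiset ℕ) = ((a :: μ.toList : List ℕ) : Multiset ℕ) := by
    rw [Multiset.coe_toList, ← Multiset.cons_coe, Multiset.coe_toList]
  have hp : List.Perm (a ::ₘ μ).toList (a :: μ.toList) := Multiset.coe_eq_coe.mp h
  unfold Dmult
  rw [hp.foldr_eq]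
  rfl

lemma Dmult_cons' (a : ℕ) (μ : Multiset ℕ) (f : Gam F) :
    Dmult (a ::ₘ μ) f = Dmult μ (pder a f) := by
  induction μ using Multiset.induction_on with
  | empty => rw [Dmult_cons, Dmult_zero, Dmult_zero]
  | cons b s ih =>
      rw [Multiset.cons_swap, Dmult_cons, ih, ← Dmult_cons]

lemma Dmult_zero_f (μ : Multiset ℕ) : Dmult μ (0 : Gam F) = 0 := by
  induction μ using Multiset.induction_on with
  | empty => exact Dmult_zero 0
  | cons b s ih => rw [Dmult_cons, ih, pder_zero]

lemma Dmult_add (μ : Multiset ℕ) (f g : Gam F) :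
    Dmult μ (f + g) = Dmult μ f + Dmult μ g := by
  induction μ using Multiset.induction_on with
  | empty => rw [Dmult_zero, Dmult_zero, Dmult_zero]
  | cons b s ih => rw [Dmult_cons, ih, pder_add, Dmult_cons, Dmult_cons]

lemma Dmult_smul (μ : Multiset ℕ) (a : ℚ) (f : Gam ℚ) :
    Dmult μ (a • f) = a • Dmult μ f := by
  induction μ using Multiset.induction_on with
  | empty => rw [Dmult_zero, Dmult_zero]
  | cons b s ih => rw [Dmult_cons, ih, pder_smul, Dmult_cons]

lemma pprod_zero : pprod F 0 = 1 := rfl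

lemma pprod_cons (a : ℕ) (μ : Multiset ℕ) :
    pprod F (a ::ₘ μ) = pvar F a * pprod F μ := by
  unfold pprod; rw [Multiset.map_cons, Multiset.prod_cons]

lemma aut_zero : aut (0 : Multiset ℕ) = 1 := rfl

lemma aut_cons (a : ℕ) (μ : Multiset ℕ) :
    aut (a ::ₘ μ) = (Multiset.count a μ + 1) * aut μ := by
  unfold aut
  by_cases h : a ∈ μ
  · have ht : (a ::ₘ μ).toFinset = μ.toFinset := by
      rw [Multiset.toFinset_cons, Finset.insert_eq_self.2 (Multiset.mem_toFinset.2 h)]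
    rw [ht, ← Finset.prod_erase_mul _ _ (Multiset.mem_toFinset.2 h),
        ← Finset.prod_erase_mul _ _ (Multiset.mem_toFinset.2 h)]
    have hcount : ∀ b ∈ μ.toFinset.erase a, Multiset.count b (a ::ₘ μ) = Multiset.count b μ := by
      intro b hb
      rw [Multiset.count_cons_of_ne (Finset.ne_of_mem_erase hb)]
    rw [Finset.prod_congr rfl fun b hb => by rw [hcount b hb]]
    rw [Multiset.count_cons_self]
    rw [Nat.factorial_succ]
    ring
  · have hc0 : Multiset.count a μ = 0 := Multiset.count_eq_zero.2 h
    have ht : (a ::ₘ μ).toFinset = insert a μ.toFinset := Multiset.toFinset_cons a μ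
    rw [ht, Finset.prod_insert (by simpa using h)]
    rw [Multiset.count_cons_self, hc0]
    have : ∀ b ∈ μ.toFinset, Multiset.count b (a ::ₘ μ) = Multiset.count b μ := by
      intro b hb
      have : b ≠ a := by rintro rfl; exact h (Multiset.mem_toFinset.1 hb)
      rw [Multiset.count_cons_of_ne this]
    rw [Finset.prod_congr rfl fun b hb => by rw [this b hb]]
    simp [Nat.factorial]

end QqAux
end

noncomputable section
open scoped Classical
set_option linter.unusedSectionVars false
set_option maxHeartbeats 1000000
namespace QqAux

lemma crea_neg (c : ℕ → ℚ) {m : ℤ} (hm : m < 0) : crea c m = 0 := by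
  rw [crea, if_neg (not_le.mpr hm)]

lemma crea_coe (c : ℕ → ℚ) (k : ℕ) :
    crea c (k : ℤ) = ∑ ρ : Nat.Partition k,
      (((ρ.parts.map c).prod) / (aut ρ.parts : ℚ)) • pprod ℚ ρ.parts := by
  rw [crea, if_pos (by positivity)]
  simp only [Int.toNat_natCast]

/-- cons map on partitions -/
def consPart (i : ℕ) (hi : 1 ≤ i) {k : ℕ} (hik : i ≤ k) (ρ : Nat.Partition (k - i)) :
    Nat.Partition k where
  parts := i ::ₘ ρ.parts
  parts_pos := by
    intro j hj
    rcases Multiset.mem_cons.1 hj with rfl | h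
    · exact hi
    · exact ρ.parts_pos h
  parts_sum := by
    rw [Multiset.sum_cons, ρ.parts_sum]
    omega

@[simp] lemma consPart_parts (i : ℕ) (hi : 1 ≤ i) {k : ℕ} (hik : i ≤ k)
    (ρ : Nat.Partition (k - i)) : (consPart i hi hik ρ).parts = i ::ₘ ρ.parts := rfl

/-- Transport of sums along cons/erase between partitions of `k` and `k - i`. -/
lemma partition_cons_sum {M : Type*} [AddCommMonoid M] (i k : ℕ) (hi : 1 ≤ i) (hik : i ≤ k)
    (G : Multiset ℕ → M) (hG : ∀ μ, i ∉ μ → G μ = 0) :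
    ∑ ρ : Nat.Partition k, G ρ.parts
      = ∑ ρ : Nat.Partition (k - i), G (i ::ₘ ρ.parts) := by
  rw [← Finset.sum_filter_of_ne (p := fun ρ : Nat.Partition k => i ∈ ρ.parts)
    (fun ρ _ h => by by_contra hmem; exact h (hG _ hmem))]
  refine Finset.sum_bij' (i := fun (ρ : Nat.Partition k) hρ =>
      (⟨ρ.parts.erase i, ?_, ?_⟩ : Nat.Partition (k - i)))
    (j := fun ρ _ => consPart i hi hik ρ) ?_ ?_ ?_ ?_ ?_
  · intro j hj
    exact ρ.parts_pos (Multiset.mem_of_mem_erase hj)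
  · have hmem : i ∈ ρ.parts := (Finset.mem_filter.1 hρ).2
    have := ρ.parts_sum
    have h2 : i + (ρ.parts.erase i).sum = k := by
      rw [← Multiset.sum_cons, Multiset.cons_erase hmem, this]
    omega
  · intro a ha
    exact Finset.mem_univ _
  · intro a ha
    simp only [Finset.mem_filter, Finset.mem_univ, true_and, consPart_parts]
    exact Multiset.mem_cons_self i _
  · intro a ha
    apply Nat.Partition.ext
    simp only [consPart_parts]
    exact Multiset.cons_erase (Finset.mem_filter.1 ha).2
  · intro a ha
    apply Nat.Partition.ext
    simp only [consPart_parts]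
    exact Multiset.erase_cons_head i _
  · intro a ha
    apply congrArg
    exact (Multiset.cons_erase (Finset.mem_filter.1 ha).2).symm

end QqAux
end

noncomputable section
open scoped Classical
set_option linter.unusedSectionVars false
set_option maxHeartbeats 1000000
namespace QqAux

lemma pvar_pderiv (i : ℕ) (hi : Odd i) (a : ℕ) :
    pderiv (⟨i, hi⟩ : OddIdx) (pvar ℚ a) = if a = i then 1 else 0 := by
  unfold pvar
  split
  · rename_i ha
    rcases eq_or_ne a i with rfl | h
    · simp
    · rw [pderiv_X_of_ne (by simp [h]), if_neg h]
  · rename_i ha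
    have : a ≠ i := by rintro rfl; exact ha hi
    simp [this]

lemma pprod_pderiv (i : ℕ) (hi : Odd i) (μ : Multiset ℕ) :
    pderiv (⟨i, hi⟩ : OddIdx) (pprod ℚ μ)
      = (Multiset.count i μ : ℚ) • pprod ℚ (μ.erase i) := by
  induction μ using Multiset.induction_on with
  | empty => simp [pprod_zero]
  | cons a μ ih =>
    rw [pprod_cons, pderiv_mul, ih, pvar_pderiv i hi a]
    rcases eq_or_ne a i with rfl | h
    · rw [if_pos rfl, Multiset.count_cons_self, Multiset.erase_cons_head]
      by_cases hmem : a ∈ μ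
      · have : pvar ℚ a * pprod ℚ (μ.erase a) = pprod ℚ μ := by
          rw [← pprod_cons, Multiset.cons_erase hmem]
        rw [mul_smul_comm, this]
        push_cast
        rw [add_smul, one_smul, one_mul]
        ring
      · rw [Multiset.count_eq_zero.2 hmem]
        norm_num
    · rw [if_neg h, Multiset.count_cons_of_ne (show i ≠ a from Ne.symm h),
        Multiset.erase_cons_tail μ h, pprod_cons, zero_mul, zero_add, mul_smul_comm]

lemma aut_ne_zero (μ : Multiset ℕ) : aut μ ≠ 0 := by
  unfold aut
  exact Finset.prod_ne_zero_iff.2 fun i _ => Nat.factorial_ne_zero _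

lemma cQ_eq_zero_of_even (i : ℕ) (h : ¬ Odd i) : cQ ℚ i = 0 := by simp [cQ, h]

lemma pder_crea (i : ℕ) (M : ℤ) :
    pder i (crea (cQ ℚ) M) = cQ ℚ i • crea (cQ ℚ) (M - i) := by
  by_cases hi : Odd i
  · have hi1 : 1 ≤ i := hi.pos
    rcases lt_or_ge M 0 with hM | hM
    · rw [crea_neg _ hM, crea_neg _ (by omega), pder_zero, smul_zero]
    · obtain ⟨k, rfl⟩ : ∃ k : ℕ, M = (k : ℤ) := ⟨M.toNat, (Int.toNat_of_nonneg hM).symm⟩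
      rw [crea_coe]
      unfold pder
      rw [dif_pos hi, map_sum]
      have hterm : ∀ ρ : Nat.Partition k,
          pderiv (⟨i, hi⟩ : OddIdx)
            (((Multiset.map (cQ ℚ) ρ.parts).prod / (aut ρ.parts : ℚ)) • pprod ℚ ρ.parts)
          = ((Multiset.map (cQ ℚ) ρ.parts).prod / (aut ρ.parts : ℚ)
              * (Multiset.count i ρ.parts : ℚ)) • pprod ℚ (ρ.parts.erase i) := by
        intro ρ
        rw [Derivation.map_smul, pprod_pderiv i hi, smul_smul]
      rw [Finset.sum_congr rfl fun ρ _ => hterm ρ]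
      by_cases hik : i ≤ k
      · rw [show (k : ℤ) - i = ((k - i : ℕ) : ℤ) by omega, crea_coe, Finset.smul_sum]
        rw [partition_cons_sum i k hi1 hik
            (fun μ => ((Multiset.map (cQ ℚ) μ).prod / (aut μ : ℚ)
              * (Multiset.count i μ : ℚ)) • pprod ℚ (μ.erase i))
            (fun μ hμ => by
              simp only [Multiset.count_eq_zero.2 hμ, Nat.cast_zero, mul_zero, zero_smul])]
        refine Finset.sum_congr rfl fun ρ _ => ?_
        simp only [Multiset.erase_cons_head, Multiset.count_cons_self, Multiset.map_cons,
          Multiset.prod_cons, aut_cons, smul_smul]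
        congr 1
        have ha : (aut ρ.parts : ℚ) ≠ 0 := by
          exact_mod_cast (Nat.pos_of_ne_zero (aut_ne_zero ρ.parts)).ne'
        have hc : (Multiset.count i ρ.parts : ℚ) + 1 ≠ 0 := by positivity
        push_cast
        field_simp
      · have hzero : ∀ ρ : Nat.Partition k, Multiset.count i ρ.parts = 0 := by
          intro ρ
          rw [Multiset.count_eq_zero]
          intro hmem
          have := Multiset.single_le_sum (fun x hx => Nat.zero_le x) _ hmem
          rw [ρ.parts_sum] at this
          omega
        rw [crea_neg _ (by omega), smul_zero]
        apply Finset.sum_eq_zero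
        intro ρ _
        rw [hzero ρ]
        norm_num
  · unfold pder
    rw [dif_neg hi, cQ_eq_zero_of_even i hi, zero_smul]

lemma annih_zero_k (d : ℕ → ℚ) (f : Gam ℚ) : annih d 0 f = f := by
  unfold annih
  rw [Fintype.sum_eq_single (default : Nat.Partition 0) (fun ρ h => absurd (Subsingleton.elim ρ default) h)]
  rw [show (default : Nat.Partition 0).parts = 0 from Nat.Partition.partition_zero_parts _]
  simp [aut_zero, Dmult_zero]

lemma annih_add (d : ℕ → ℚ) (k : ℕ) (f g : Gam ℚ) :
    annih d k (f + g) = annih d k f + annih d k g := by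
  unfold annih
  rw [← Finset.sum_add_distrib]
  exact Finset.sum_congr rfl fun ρ _ => by rw [Dmult_add, smul_add]

lemma annih_smul (d : ℕ → ℚ) (k : ℕ) (a : ℚ) (f : Gam ℚ) :
    annih d k (a • f) = a • annih d k f := by
  unfold annih
  rw [Finset.smul_sum]
  exact Finset.sum_congr rfl fun ρ _ => by rw [Dmult_smul, smul_comm]

end QqAux
end

noncomputable section
open scoped Classical
set_option linter.unusedSectionVars false
set_option maxHeartbeats 1000000
namespace QqAux

lemma sum_count_mul (N : ℕ) (μ : Multiset ℕ) (h : ∀ a ∈ μ, a < N) :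
    ∑ i ∈ Finset.range N, i * Multiset.count i μ = μ.sum := by
  induction μ using Multiset.induction_on with
  | empty => simp
  | cons a s ih =>
    have ha : a ∈ Finset.range N := Finset.mem_range.2 (h a (Multiset.mem_cons_self a s))
    have hs : ∀ b ∈ s, b < N := fun b hb => h b (Multiset.mem_cons_of_mem hb)
    simp only [Multiset.count_cons, Nat.mul_add, Finset.sum_add_distrib, ih hs,
      Multiset.sum_cons, mul_ite, mul_one, mul_zero]
    rw [Finset.sum_ite_eq' (Finset.range N) a (fun i => i), if_pos ha]
    omega

lemma annih_rec (d : ℕ → ℚ) (k : ℕ) (f : Gam ℚ) :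
    (k : ℚ) • annih d k f
      = ∑ i ∈ Finset.range (k + 1), ((i : ℚ) * d i) • annih d (k - i) (pder i f) := by
  unfold annih
  rw [Finset.smul_sum]
  have hL : ∀ ρ : Nat.Partition k,
      (k:ℚ) • ((((ρ.parts.map d).prod) / (aut ρ.parts : ℚ)) • Dmult ρ.parts f)
      = ∑ i ∈ Finset.range (k+1),
          (((i * Multiset.count i ρ.parts : ℕ) : ℚ)
            * (((ρ.parts.map d).prod) / (aut ρ.parts : ℚ))) • Dmult ρ.parts f := by
    intro ρ
    rw [← Finset.sum_smul, ← Finset.sum_mul, ← Nat.cast_sum, sum_count_mul (k+1) ρ.parts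
      (fun a ha => by
        have := Multiset.single_le_sum (fun x _ => Nat.zero_le x) _ ha
        rw [ρ.parts_sum] at this
        omega),
      ρ.parts_sum, smul_smul]
  rw [Finset.sum_congr rfl (fun ρ _ => hL ρ), Finset.sum_comm]
  refine Finset.sum_congr rfl fun i hi => ?_
  by_cases hi0 : i = 0
  · subst hi0
    simp
  · have hi1 : 1 ≤ i := Nat.one_le_iff_ne_zero.2 hi0
    have hik : i ≤ k := by
      have := Finset.mem_range.1 hi
      omega
    rw [partition_cons_sum i k hi1 hik
        (fun μ => (((i * Multiset.count i μ : ℕ) : ℚ)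
            * (((μ.map d).prod) / (aut μ : ℚ))) • Dmult μ f)
        (fun μ hμ => by
          simp only [Multiset.count_eq_zero.2 hμ, Nat.mul_zero, Nat.cast_zero, zero_mul,
            zero_smul])]
    rw [Finset.smul_sum]
    refine Finset.sum_congr rfl fun ρ _ => ?_
    rw [Dmult_cons', Multiset.count_cons_self, Multiset.map_cons, Multiset.prod_cons,
      aut_cons, smul_smul]
    congr 1
    have ha : (aut ρ.parts : ℚ) ≠ 0 := by
      exact_mod_cast (Nat.pos_of_ne_zero (aut_ne_zero ρ.parts)).ne'
    have hc : (Multiset.count i ρ.parts : ℚ) + 1 ≠ 0 := by positivity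
    push_cast
    field_simp

end QqAux
end

noncomputable section
open scoped Classical
set_option linter.unusedSectionVars false
set_option maxHeartbeats 1000000
namespace QqAux

lemma sum_triangle {M : Type*} [AddCommMonoid M] (n : ℕ) (f : ℕ → ℕ → M) :
    ∑ i ∈ Finset.range n, ∑ j ∈ Finset.range (n - i), f i j
      = ∑ t ∈ Finset.range n, ∑ i ∈ Finset.range (t + 1), f i (t - i) := by
  induction n with
  | zero => simp
  | succ n ih =>
    rw [Finset.sum_range_succ, Finset.sum_range_succ]
    have h1 : ∀ i ∈ Finset.range n, ∑ j ∈ Finset.range (n + 1 - i), f i j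
        = ∑ j ∈ Finset.range (n - i), f i j + f i (n - i) := by
      intro i hi
      have : n + 1 - i = (n - i) + 1 := by
        have := Finset.mem_range.1 hi
        omega
      rw [this, Finset.sum_range_succ]
    rw [Finset.sum_congr rfl h1, Finset.sum_add_distrib, ih]
    have h2 : n + 1 - n = 1 := by omega
    rw [h2, Finset.sum_range_one, Finset.sum_range_succ, Nat.sub_self, add_assoc]

lemma Ef_zero : Ef 0 = 1 := rfl

lemma Ef_pos (j : ℕ) (hj : 1 ≤ j) : Ef j = 2 * (-1 : ℚ) ^ j := by
  rw [Ef, if_neg (by omega)]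

lemma Gsum : ∀ t : ℕ, 1 ≤ t →
    (∑ j ∈ Finset.range (t + 1), if Odd (t - j) then Ef j else 0) = (-1 : ℚ) ^ (t + 1) * t := by
  intro t
  induction t using Nat.strong_induction_on with
  | _ t ih =>
    match t with
    | 0 => intro h; exact absurd h (by omega)
    | 1 => intro _; norm_num [Finset.sum_range_succ, Ef]
    | 2 => intro _; norm_num [Finset.sum_range_succ, Ef]
    | (s + 3) =>
      intro _
      have hIH := ih (s + 1) (by omega) (by omega)
      rw [Finset.sum_range_succ, Finset.sum_range_succ]
      have hcongr : ∀ j ∈ Finset.range (s + 2),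
          (if Odd (s + 3 - j) then Ef j else 0) = (if Odd (s + 1 - j) then Ef j else 0) := by
        intro j hj
        have hj' : j ≤ s + 1 := by have := Finset.mem_range.1 hj; omega
        have : s + 3 - j = (s + 1 - j) + 2 := by omega
        rw [this]
        congr 1
        simp [Nat.odd_add]
      rw [Finset.sum_congr rfl hcongr, hIH]
      have h2 : s + 3 - (s + 2) = 1 := by omega
      have h3 : s + 3 - (s + 3) = 0 := by omega
      rw [h2, h3]
      rw [if_pos (by decide), if_neg (by decide)]
      rw [Ef_pos (s + 2) (by omega)]
      push_cast
      ring

lemma Ssum (t : ℕ) (ht : 1 ≤ t) :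
    (∑ i ∈ Finset.range (t + 1), if Odd i then Ef (t - i) else 0) = (-1 : ℚ) ^ (t + 1) * t := by
  have := Finset.sum_range_reflect (fun i => if Odd i then Ef (t - i) else 0) (t + 1)
  rw [← this]
  rw [← Gsum t ht]
  refine Finset.sum_congr rfl fun j hj => ?_
  have hj' : j ≤ t := by have := Finset.mem_range.1 hj; omega
  have h1 : t + 1 - 1 - j = t - j := by omega
  have h2 : t - (t - j) = j := by omega
  rw [h1, h2]

lemma coefQ (i : ℕ) : (i : ℚ) * dQ ℚ i * cQ ℚ i = if Odd i then -2 else 0 := by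
  unfold dQ cQ
  by_cases h : Odd i
  · rw [if_pos h, if_pos h, if_pos h]
    have : (i : ℚ) ≠ 0 := by
      have := h.pos
      positivity
    field_simp
  · rw [if_neg h, if_neg h, if_neg h]
    ring

lemma Ef_rec (t : ℕ) :
    (t : ℚ) * Ef t
      = ∑ i ∈ Finset.range (t + 1), ((i : ℚ) * dQ ℚ i * cQ ℚ i) * Ef (t - i) := by
  rcases Nat.eq_zero_or_pos t with rfl | ht
  · simp
  · have h1 : ∀ i ∈ Finset.range (t + 1), ((i : ℚ) * dQ ℚ i * cQ ℚ i) * Ef (t - i)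
        = -2 * (if Odd i then Ef (t - i) else 0) := by
      intro i _
      rw [coefQ i]
      split <;> ring
    rw [Finset.sum_congr rfl h1, ← Finset.mul_sum, Ssum t ht, Ef_pos t ht]
    ring

end QqAux
end

noncomputable section
open scoped Classical
set_option linter.unusedSectionVars false
set_option maxHeartbeats 1000000
namespace QqAux

lemma sum_triangle' {M : Type*} [AddCommMonoid M] (n : ℕ) (f : ℕ → ℕ → M) :
    ∑ i ∈ Finset.range n, ∑ j ∈ Finset.range (n - i), f i j
      = ∑ j ∈ Finset.range n, ∑ i ∈ Finset.range (n - j), f i j := by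
  rw [sum_triangle, sum_triangle n (fun j i => f i j)]
  refine Finset.sum_congr rfl fun t ht => ?_
  rw [← Finset.sum_range_reflect (fun j => f (t - j) j) (t + 1)]
  refine Finset.sum_congr rfl fun i hi => ?_
  have hi' : i ≤ t := by have := Finset.mem_range.1 hi; omega
  have h1 : t + 1 - 1 - i = t - i := by omega
  have h2 : t - (t - i) = i := by omega
  rw [h1, h2]

lemma annih_crea_mul : ∀ k : ℕ, ∀ (M : ℤ) (f : Gam ℚ),
    annih (dQ ℚ) k (crea (cQ ℚ) M * f)
      = ∑ j ∈ Finset.range (k + 1),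
          Ef j • (crea (cQ ℚ) (M - (j : ℕ)) * annih (dQ ℚ) (k - j) f) := by
  intro k
  induction k using Nat.strong_induction_on with
  | _ k ih =>
  intro M f
  rcases Nat.eq_zero_or_pos k with rfl | hk
  · rw [annih_zero_k]
    simp [annih_zero_k, Ef_zero]
  · have hkQ : (k : ℚ) ≠ 0 := by exact_mod_cast hk.ne'
    -- abbreviations
    set C : ℤ → Gam ℚ := crea (cQ ℚ) with hC
    have key : (k : ℚ) • annih (dQ ℚ) k (C M * f)
        = (k : ℚ) • ∑ j ∈ Finset.range (k + 1),
            Ef j • (C (M - (j : ℕ)) * annih (dQ ℚ) (k - j) f) := by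
      -- step 1: apply the recurrence
      rw [annih_rec, Finset.sum_range_succ']
      simp only [Nat.cast_zero, zero_mul, zero_smul, add_zero]
      -- step 2: expand the derivative of the product and use IH
      have expand : ∀ i ∈ Finset.range k,
          (((i + 1 : ℕ) : ℚ) * dQ ℚ (i + 1)) •
              annih (dQ ℚ) (k - (i + 1)) (pder (i + 1) (C M * f))
          = (∑ j ∈ Finset.range (k - i),
              ((((i + 1 : ℕ) : ℚ) * dQ ℚ (i + 1) * cQ ℚ (i + 1)) * Ef j) •
                (C (M - ((i + 1 : ℕ) : ℤ) - (j : ℕ)) * annih (dQ ℚ) (k - (i + 1) - j) f))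
            + (∑ j ∈ Finset.range (k - i),
              ((((i + 1 : ℕ) : ℚ) * dQ ℚ (i + 1)) * Ef j) •
                (C (M - (j : ℕ)) * annih (dQ ℚ) (k - (i + 1) - j) (pder (i + 1) f))) := by
        intro i hi
        have hik : i + 1 ≤ k := Finset.mem_range.1 hi
        have hlt : k - (i + 1) < k := by omega
        have hr : k - (i + 1) + 1 = k - i := by omega
        rw [pder_mul, pder_crea, annih_add, smul_mul_assoc, annih_smul,
          ih (k - (i + 1)) hlt (M - ((i + 1 : ℕ) : ℤ)) f,
          ih (k - (i + 1)) hlt M (pder (i + 1) f), hr, smul_add, smul_smul,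
          Finset.smul_sum, Finset.smul_sum]
        congr 1
        · refine Finset.sum_congr rfl fun j hj => ?_
          rw [smul_smul]
        · refine Finset.sum_congr rfl fun j hj => ?_
          rw [smul_smul]
      rw [Finset.sum_congr rfl expand, Finset.sum_add_distrib]
      -- part A
      have hA : ∑ i ∈ Finset.range k, ∑ j ∈ Finset.range (k - i),
            ((((i + 1 : ℕ) : ℚ) * dQ ℚ (i + 1) * cQ ℚ (i + 1)) * Ef j) •
              (C (M - ((i + 1 : ℕ) : ℤ) - (j : ℕ)) * annih (dQ ℚ) (k - (i + 1) - j) f)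
          = ∑ t ∈ Finset.range k, (((t + 1 : ℕ) : ℚ) * Ef (t + 1)) •
              (C (M - ((t + 1 : ℕ) : ℤ)) * annih (dQ ℚ) (k - (t + 1)) f) := by
        rw [sum_triangle]
        refine Finset.sum_congr rfl fun t ht => ?_
        have harg : ∀ i ∈ Finset.range (t + 1),
            ((((i + 1 : ℕ) : ℚ) * dQ ℚ (i + 1) * cQ ℚ (i + 1)) * Ef (t - i)) •
              (C (M - ((i + 1 : ℕ) : ℤ) - ((t - i : ℕ) : ℕ)) * annih (dQ ℚ) (k - (i + 1) - (t - i)) f)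
            = ((((i + 1 : ℕ) : ℚ) * dQ ℚ (i + 1) * cQ ℚ (i + 1)) * Ef (t - i)) •
              (C (M - ((t + 1 : ℕ) : ℤ)) * annih (dQ ℚ) (k - (t + 1)) f) := by
          intro i hi
          have hit : i ≤ t := by have := Finset.mem_range.1 hi; omega
          have h1 : M - ((i + 1 : ℕ) : ℤ) - ((t - i : ℕ) : ℕ) = M - ((t + 1 : ℕ) : ℤ) := by
            push_cast [Nat.cast_sub hit]
            ring
          have h2 : k - (i + 1) - (t - i) = k - (t + 1) := by omega
          rw [h1, h2]
        rw [Finset.sum_congr rfl harg, ← Finset.sum_smul]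
        congr 1
        have := Ef_rec (t + 1)
        rw [Finset.sum_range_succ'] at this
        simp only [Nat.cast_zero, zero_mul, zero_smul, add_zero, Nat.succ_sub_succ] at this
        rw [← this]
      -- part B
      have hB : ∑ i ∈ Finset.range k, ∑ j ∈ Finset.range (k - i),
            ((((i + 1 : ℕ) : ℚ) * dQ ℚ (i + 1)) * Ef j) •
              (C (M - (j : ℕ)) * annih (dQ ℚ) (k - (i + 1) - j) (pder (i + 1) f))
          = ∑ j ∈ Finset.range k, (((k - j : ℕ) : ℚ) * Ef j) •
              (C (M - (j : ℕ)) * annih (dQ ℚ) (k - j) f) := by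
        rw [sum_triangle']
        refine Finset.sum_congr rfl fun j hj => ?_
        have hjk : j < k := Finset.mem_range.1 hj
        have hrec := annih_rec (dQ ℚ) (k - j) f
        rw [Finset.sum_range_succ'] at hrec
        simp only [Nat.cast_zero, zero_mul, zero_smul, add_zero] at hrec
        calc ∑ i ∈ Finset.range (k - j),
              ((((i + 1 : ℕ) : ℚ) * dQ ℚ (i + 1)) * Ef j) •
                (C (M - (j : ℕ)) * annih (dQ ℚ) (k - (i + 1) - j) (pder (i + 1) f))
            = Ef j • (C (M - (j : ℕ)) * ∑ i ∈ Finset.range (k - j),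
                (((i + 1 : ℕ) : ℚ) * dQ ℚ (i + 1)) •
                  annih (dQ ℚ) (k - j - (i + 1)) (pder (i + 1) f)) := by
              rw [Finset.mul_sum, Finset.smul_sum]
              refine Finset.sum_congr rfl fun i hi => ?_
              have h3 : k - (i + 1) - j = k - j - (i + 1) := by omega
              rw [h3, mul_smul_comm, smul_smul, mul_comm]
          _ = (((k - j : ℕ) : ℚ) * Ef j) • (C (M - (j : ℕ)) * annih (dQ ℚ) (k - j) f) := by
              rw [← hrec, mul_smul_comm, smul_smul, mul_comm]
      rw [hA, hB]
      -- extend both sums to range (k+1) and combine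
      have hA' : ∑ t ∈ Finset.range k, (((t + 1 : ℕ) : ℚ) * Ef (t + 1)) •
              (C (M - ((t + 1 : ℕ) : ℤ)) * annih (dQ ℚ) (k - (t + 1)) f)
          = ∑ j ∈ Finset.range (k + 1), ((j : ℚ) * Ef j) •
              (C (M - (j : ℕ)) * annih (dQ ℚ) (k - j) f) := by
        rw [Finset.sum_range_succ']
        simp
      have hB' : ∑ j ∈ Finset.range k, (((k - j : ℕ) : ℚ) * Ef j) •
              (C (M - (j : ℕ)) * annih (dQ ℚ) (k - j) f)
          = ∑ j ∈ Finset.range (k + 1), (((k - j : ℕ) : ℚ) * Ef j) •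
              (C (M - (j : ℕ)) * annih (dQ ℚ) (k - j) f) := by
        rw [Finset.sum_range_succ]
        simp
      rw [hA', hB', ← Finset.sum_add_distrib, Finset.smul_sum]
      refine Finset.sum_congr rfl fun j hj => ?_
      have hjk : j ≤ k := by have := Finset.mem_range.1 hj; omega
      rw [← add_smul, smul_smul]
      congr 1
      push_cast [Nat.cast_sub hjk]
      ring
    have := congrArg (fun x => ((k : ℚ)⁻¹) • x) key
    simpa [smul_smul, inv_mul_cancel₀ hkQ] using this

end QqAux
end

noncomputable section
open scoped Classical
set_option linter.unusedSectionVars false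
set_option maxHeartbeats 1000000
namespace QqAux

lemma pderiv_totalDegree (x : OddIdx) (g : Gam ℚ) :
    pderiv x g = 0 ∨ (pderiv x g).totalDegree + 1 ≤ g.totalDegree := by
  by_cases h : pderiv x g = 0
  · exact Or.inl h
  · right
    have hsup : ∀ m ∈ (pderiv x g).support, (m.sum fun _ e => e) + 1 ≤ g.totalDegree := by
      intro m hm
      have hg : pderiv x g = ∑ s ∈ g.support, pderiv x (monomial s (coeff s g)) := by
        conv_lhs => rw [g.as_sum]
        rw [map_sum]
      rw [hg] at hm
      obtain ⟨s, hs, hms⟩ := Finset.mem_biUnion.1 (MvPolynomial.support_sum hm)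
      rw [pderiv_monomial] at hms
      have hsub := MvPolynomial.support_monomial_subset hms
      have hm_eq : m = s - Finsupp.single x 1 := Finset.mem_singleton.1 hsub
      have hcoeff : coeff s g * s x ≠ 0 := by
        intro hzero
        rw [hzero] at hms
        simp at hms
      have hsx : 1 ≤ s x := by
        rcases Nat.eq_zero_or_pos (s x) with h0 | h1
        · exfalso; apply hcoeff; rw [h0]; simp
        · exact h1
      have hle : Finsupp.single x 1 ≤ s := by
        rw [Finsupp.single_le_iff]
        exact hsx
      have hdecomp : (s - Finsupp.single x 1) + Finsupp.single x 1 = s :=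
        tsub_add_cancel_of_le hle
      have hsum : (m.sum fun _ e => e) + 1 = s.sum fun _ e => e := by
        rw [hm_eq]
        have := congrArg (fun t => t.sum fun (_ : OddIdx) e => e) hdecomp
        rw [← this, Finsupp.sum_add_index (by intro _ _; rfl) (by intro _ _ _ _; rfl)]
        simp [Finsupp.sum_single_index]
      rw [hsum]
      exact MvPolynomial.le_totalDegree hs
    have hne : (pderiv x g).support.Nonempty := MvPolynomial.support_nonempty.2 h
    obtain ⟨m0, hm0⟩ := hne
    have hD : 0 < g.totalDegree := by
      have := hsup m0 hm0
      omega
    have hlt : (pderiv x g).totalDegree < g.totalDegree := by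
      show (pderiv x g).support.sup (fun s => s.sum fun _ e => e) < g.totalDegree
      rw [Finset.sup_lt_iff (show ⊥ < g.totalDegree from hD)]
      intro m hm
      have := hsup m hm
      omega
    omega

lemma pder_totalDegree (i : ℕ) (g : Gam ℚ) :
    pder i g = 0 ∨ (pder i g).totalDegree + 1 ≤ g.totalDegree := by
  unfold pder
  split
  · exact pderiv_totalDegree _ g
  · exact Or.inl rfl

lemma Dmult_deg (μ : Multiset ℕ) (f : Gam ℚ) :
    Dmult μ f = 0 ∨ (Dmult μ f).totalDegree + Multiset.card μ ≤ f.totalDegree := by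
  induction μ using Multiset.induction_on with
  | empty => right; rw [Dmult_zero]; simp
  | cons a s ih =>
    rw [Dmult_cons]
    rcases ih with h0 | hle
    · left; rw [h0, pder_zero]
    · rcases pder_totalDegree a (Dmult s f) with h0 | hd
      · exact Or.inl h0
      · right
        rw [Multiset.card_cons]
        omega

lemma Dmult_kill_card (μ : Multiset ℕ) (f : Gam ℚ) (h : f.totalDegree < Multiset.card μ) :
    Dmult μ f = 0 := by
  rcases Dmult_deg μ f with h0 | hle
  · exact h0
  · omega

lemma pder_big (f : Gam ℚ) (i : ℕ) (h : (f.vars.sup fun v => v.1) < i) : pder i f = 0 := by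
  unfold pder
  split
  · rename_i hi
    apply pderiv_eq_zero_of_notMem_vars
    intro hmem
    have hle : i ≤ (f.vars.sup fun v : OddIdx => v.1) :=
      Finset.le_sup (f := fun v : OddIdx => v.1) hmem
    omega
  · rfl

lemma Dmult_kill_big (μ : Multiset ℕ) (f : Gam ℚ) (i : ℕ) (hmem : i ∈ μ)
    (h : (f.vars.sup fun v => v.1) < i) : Dmult μ f = 0 := by
  rw [← Multiset.cons_erase hmem, Dmult_cons', pder_big f i h, Dmult_zero_f]

lemma annih_vanish (d : ℕ → ℚ) (k : ℕ) (f : Gam ℚ) (h : bnd f ≤ k) : annih d k f = 0 := by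
  unfold annih
  apply Finset.sum_eq_zero
  intro ρ _
  set V := (f.vars.sup fun v => v.1) with hV
  set D := f.totalDegree with hD
  have hsum : ρ.parts.sum = k := ρ.parts_sum
  have hbnd : (D + 1) * (V + 1) + 1 ≤ k := h
  have hz : Dmult ρ.parts f = 0 := by
    by_cases hbig : ∃ i ∈ ρ.parts, V < i
    · obtain ⟨i, hi, hVi⟩ := hbig
      exact Dmult_kill_big ρ.parts f i hi hVi
    · push_neg at hbig
      have hcard : ρ.parts.sum ≤ Multiset.card ρ.parts * V := by
        have := Multiset.sum_le_card_nsmul ρ.parts V hbig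
        simpa using this
      have hV1 : 1 ≤ V := by
        by_contra hV0
        have hV0' : V = 0 := by omega
        have : ρ.parts = 0 := by
          rw [Multiset.eq_zero_iff_forall_notMem]
          intro a ha
          have h1 := ρ.parts_pos ha
          have h2 := hbig a ha
          omega
        rw [this] at hsum
        simp at hsum
        omega
      have hcard' : D < Multiset.card ρ.parts := by
        nlinarith [hsum, hcard, hbnd]
      exact Dmult_kill_card ρ.parts f hcard'
  rw [hz, smul_zero]

lemma vop_ext (c d : ℕ → ℚ) (m : ℤ) (f : Gam ℚ) (N : ℕ) (h : bnd f ≤ N) :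
    vop c d m f = ∑ k ∈ Finset.range N, crea c (m + k) * annih d k f := by
  unfold vop
  apply Finset.sum_subset (Finset.range_subset_range.2 h)
  intro k _ hk
  have hbk : bnd f ≤ k := by
    by_contra hlt
    exact hk (Finset.mem_range.2 (by omega))
  rw [annih_vanish d k f hbk, mul_zero]

end QqAux
end

noncomputable section
open scoped Classical
set_option linter.unusedSectionVars false
set_option maxHeartbeats 2000000

open QqAux in
theorem Q_q_commutation (m : ℤ) (n : ℕ) (hn : 1 ≤ n) (f : Gam ℚ) :
    Qop m (qel ℚ (n : ℤ) * f)
      = qel ℚ (n : ℤ) * Qop m f - Qop (m + 1) (qel ℚ ((n : ℤ) - 1) * f)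
        - qel ℚ ((n : ℤ) - 1) * Qop (m + 1) f := by
  classical
  set C : ℤ → Gam ℚ := crea (cQ ℚ) with hC
  set A : ℕ → Gam ℚ := fun k => annih (dQ ℚ) k f with hA
  set N : ℕ := max (bnd (qel ℚ (n : ℤ) * f)) (max (bnd f) (bnd (qel ℚ ((n : ℤ) - 1) * f)))
      + bnd f + n + 2 with hN
  have hN1 : bnd (qel ℚ (n : ℤ) * f) ≤ N := by omega
  have hN2 : bnd f ≤ N := by omega
  have hN3 : bnd (qel ℚ ((n : ℤ) - 1) * f) ≤ N := by omega
  have hNbf : bnd f + n + 1 ≤ N := by omega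
  have hNn : n + 1 ≤ N := by omega
  have hqel : qel ℚ (n : ℤ) = C (n : ℤ) := rfl
  have hqel' : qel ℚ ((n : ℤ) - 1) = C ((n : ℤ) - 1) := rfl
  -- expand the four operators using the common bound N
  have e1 : Qop m (qel ℚ (n : ℤ) * f)
      = ∑ k ∈ Finset.range N, C (m + k) * annih (dQ ℚ) k (C (n : ℤ) * f) := by
    rw [Qop, vop_ext _ _ _ _ N hN1, hqel, ← hC]
  have e2 : Qop m f = ∑ k ∈ Finset.range N, C (m + k) * A k := by
    rw [Qop, vop_ext _ _ _ _ N hN2, ← hC]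
  have e3 : Qop (m + 1) (qel ℚ ((n : ℤ) - 1) * f)
      = ∑ k ∈ Finset.range N, C (m + 1 + k) * annih (dQ ℚ) k (C ((n : ℤ) - 1) * f) := by
    rw [Qop, vop_ext _ _ _ _ N hN3, hqel', ← hC]
  have e4 : Qop (m + 1) f = ∑ k ∈ Finset.range N, C (m + 1 + k) * A k := by
    rw [Qop, vop_ext _ _ _ _ N hN2, ← hC]
  rw [e1, e2, e3, e4, hqel, hqel']
  -- expand annihilation of products
  have hex : ∀ (M : ℤ) (b : ℤ), (∀ k ∈ Finset.range N,
      C (b + k) * annih (dQ ℚ) k (C M * f)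
      = ∑ j ∈ Finset.range (k + 1), Ef j • (C (b + k) * (C (M - j) * A (k - j)))) := by
    intro M b k _
    rw [hC, hA]
    rw [annih_crea_mul k M f, Finset.mul_sum]
    exact Finset.sum_congr rfl fun j _ => mul_smul_comm _ _ _
  -- triangle reindexing for a double sum of this shape
  have tri : ∀ b M : ℤ, M ≤ (n : ℤ) →
      ∑ k ∈ Finset.range N, ∑ j ∈ Finset.range (k + 1),
          Ef j • (C (b + k) * (C (M - j) * A (k - j)))
      = ∑ i ∈ Finset.range N, ∑ k ∈ Finset.range N,
          Ef i • (C (b + i + k) * (C (M - i) * A k)) := by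
    intro b M hM
    have h1 : ∀ t ∈ Finset.range N,
        (∑ j ∈ Finset.range (t + 1), Ef j • (C (b + t) * (C (M - j) * A (t - j))))
        = ∑ i ∈ Finset.range (t + 1),
            Ef i • (C (b + i + (t - i : ℕ)) * (C (M - i) * A (t - i))) := by
      intro t _
      refine Finset.sum_congr rfl fun i hi => ?_
      have hit : i ≤ t := by have := Finset.mem_range.1 hi; omega
      have harg : b + (i : ℤ) + ((t - i : ℕ) : ℤ) = b + (t : ℤ) := by
        push_cast [Nat.cast_sub hit]
        ring
      rw [harg]
    rw [Finset.sum_congr rfl h1, ← sum_triangle N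
      (fun i k => Ef i • (C (b + i + k) * (C (M - i) * A k)))]
    refine Finset.sum_congr rfl fun i hi => ?_
    apply Finset.sum_subset
    · apply Finset.range_subset_range.2
      omega
    · intro k hk hk'
      have hik : N - i ≤ k := by
        have := Finset.mem_range.1 hk
        by_contra hcon
        exact hk' (Finset.mem_range.2 (by omega))
      have hkN : k < N := Finset.mem_range.1 hk
      have hiN : i < N := Finset.mem_range.1 hi
      by_cases hbf : bnd f ≤ k
      · have hz : A k = 0 := by rw [hA]; exact annih_vanish _ _ _ hbf
        rw [hz, mul_zero, mul_zero, smul_zero]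
      · have hin : n < i := by omega
        have hz : C (M - i) = 0 := by
          rw [hC]
          exact crea_neg _ (by omega)
        rw [hz, zero_mul, mul_zero, smul_zero]
  have L1 : ∑ k ∈ Finset.range N, C (m + k) * annih (dQ ℚ) k (C (n : ℤ) * f)
      = ∑ i ∈ Finset.range N, ∑ k ∈ Finset.range N,
          Ef i • (C (m + i + k) * (C ((n : ℤ) - i) * A k)) := by
    rw [Finset.sum_congr rfl (hex (n : ℤ) m), tri m (n : ℤ) le_rfl]
  have L3 : ∑ k ∈ Finset.range N, C (m + 1 + k) * annih (dQ ℚ) k (C ((n : ℤ) - 1) * f)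
      = ∑ i ∈ Finset.range N, ∑ k ∈ Finset.range N,
          Ef i • (C (m + 1 + i + k) * (C ((n : ℤ) - 1 - i) * A k)) := by
    rw [Finset.sum_congr rfl (hex ((n : ℤ) - 1) (m + 1)), tri (m + 1) ((n : ℤ) - 1) (by omega)]
  rw [L1, L3, Finset.sum_comm, Finset.sum_comm
      (f := fun (i k : ℕ) => Ef i • (C (m + 1 + i + k) * (C ((n : ℤ) - 1 - i) * A k))),
    Finset.mul_sum, Finset.mul_sum, ← Finset.sum_sub_distrib, ← Finset.sum_sub_distrib]
  refine Finset.sum_congr rfl fun k hk => ?_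
  -- per-k identity
  obtain ⟨N1, hNsucc⟩ : ∃ N1, N = N1 + 2 := ⟨N - 2, by omega⟩
  have hnN1 : n ≤ N1 + 1 := by omega
  have key : (∑ i ∈ Finset.range N, Ef i • (C (m + i + k) * (C ((n : ℤ) - i) * A k)))
      + (∑ i ∈ Finset.range N, Ef i • (C (m + 1 + i + k) * (C ((n : ℤ) - 1 - i) * A k)))
      = C (n : ℤ) * (C (m + k) * A k) - C ((n : ℤ) - 1) * (C (m + 1 + k) * A k) := by
    rw [hNsucc, show N1 + 2 = (N1 + 1) + 1 from rfl]
    rw [Finset.sum_range_succ' (fun i => Ef i • (C (m + i + k) * (C ((n : ℤ) - i) * A k))),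
      Finset.sum_range_succ (fun i => Ef i • (C (m + 1 + i + k) * (C ((n : ℤ) - 1 - i) * A k)))]
    have hU_last : Ef (N1 + 1) •
        (C (m + 1 + (N1 + 1 : ℕ) + k) * (C ((n : ℤ) - 1 - (N1 + 1 : ℕ)) * A k)) = 0 := by
      have hz : C ((n : ℤ) - 1 - (N1 + 1 : ℕ)) = 0 := by
        rw [hC]; exact crea_neg _ (by push_cast; omega)
      rw [hz, zero_mul, mul_zero, smul_zero]
    rw [hU_last, add_zero]
    have hcomb : (∑ i ∈ Finset.range (N1 + 1),
          Ef (i + 1) • (C (m + (i + 1 : ℕ) + k) * (C ((n : ℤ) - (i + 1 : ℕ)) * A k)))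
        + (∑ i ∈ Finset.range (N1 + 1),
          Ef i • (C (m + 1 + i + k) * (C ((n : ℤ) - 1 - i) * A k)))
        = - (C (m + 1 + k) * (C ((n : ℤ) - 1) * A k)) := by
      rw [← Finset.sum_add_distrib]
      rw [Finset.sum_range_succ' (fun i => Ef (i + 1) • (C (m + (i + 1 : ℕ) + k)
          * (C ((n : ℤ) - (i + 1 : ℕ)) * A k))
        + Ef i • (C (m + 1 + i + k) * (C ((n : ℤ) - 1 - i) * A k)))]
      have hzero : ∀ i ∈ Finset.range N1,
          Ef (i + 1 + 1) • (C (m + (i + 1 + 1 : ℕ) + k) * (C ((n : ℤ) - (i + 1 + 1 : ℕ)) * A k))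
          + Ef (i + 1) • (C (m + 1 + (i + 1 : ℕ) + k) * (C ((n : ℤ) - 1 - (i + 1 : ℕ)) * A k))
          = 0 := by
        intro i _
        have harg1 : m + 1 + ((i + 1 : ℕ) : ℤ) + k = m + ((i + 1 + 1 : ℕ) : ℤ) + k := by
          push_cast; ring
        have harg2 : (n : ℤ) - 1 - ((i + 1 : ℕ) : ℤ) = (n : ℤ) - ((i + 1 + 1 : ℕ) : ℤ) := by
          push_cast; ring
        rw [harg1, harg2, ← add_smul]
        have hEf : Ef (i + 1 + 1) + Ef (i + 1) = 0 := by
          rw [Ef_pos _ (by omega), Ef_pos _ (by omega)]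
          ring
        rw [hEf, zero_smul]
      rw [Finset.sum_congr rfl hzero, Finset.sum_const, smul_zero, zero_add]
      have harg3 : m + ((0 + 1 : ℕ) : ℤ) + k = m + 1 + ((0 : ℕ) : ℤ) + k := by
        push_cast; ring
      have harg4 : (n : ℤ) - ((0 + 1 : ℕ) : ℤ) = (n : ℤ) - 1 - ((0 : ℕ) : ℤ) := by
        push_cast; ring
      rw [harg3, harg4, ← add_smul]
      have hEf01 : Ef (0 + 1) + Ef 0 = -1 := by
        rw [Ef_pos _ (by omega), Ef_zero]
        ring
      rw [hEf01]
      have : m + 1 + ((0 : ℕ) : ℤ) + k = m + 1 + k := by push_cast; ring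
      rw [this]
      have : (n : ℤ) - 1 - ((0 : ℕ) : ℤ) = (n : ℤ) - 1 := by push_cast; ring
      rw [this, neg_one_smul]
    rw [add_right_comm, hcomb]
    have hT0 : Ef 0 • (C (m + (0 : ℕ) + k) * (C ((n : ℤ) - (0 : ℕ)) * A k))
        = C (m + k) * (C (n : ℤ) * A k) := by
      rw [Ef_zero, one_smul]
      have h1 : m + ((0 : ℕ) : ℤ) + k = m + k := by push_cast; ring
      have h2 : (n : ℤ) - ((0 : ℕ) : ℤ) = (n : ℤ) := by push_cast; ring
      rw [h1, h2]
    rw [hT0]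
    ring
  calc ∑ i ∈ Finset.range N, Ef i • (C (m + i + k) * (C ((n : ℤ) - i) * A k))
      = ((∑ i ∈ Finset.range N, Ef i • (C (m + i + k) * (C ((n : ℤ) - i) * A k)))
          + (∑ i ∈ Finset.range N, Ef i • (C (m + 1 + i + k) * (C ((n : ℤ) - 1 - i) * A k))))
        - (∑ i ∈ Finset.range N, Ef i • (C (m + 1 + i + k) * (C ((n : ℤ) - 1 - i) * A k))) := by
        abel
    _ = (C (n : ℤ) * (C (m + k) * A k) - C ((n : ℤ) - 1) * (C (m + 1 + k) * A k))
        - (∑ i ∈ Finset.range N, Ef i • (C (m + 1 + i + k) * (C ((n : ℤ) - 1 - i) * A k))) := by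
        rw [key]
    _ = C (n : ℤ) * (C (m + k) * A k)
        - (∑ i ∈ Finset.range N, Ef i • (C (m + 1 + i + k) * (C ((n : ℤ) - 1 - i) * A k)))
        - C ((n : ℤ) - 1) * (C (m + 1 + k) * A k) := by
        abel
end
end
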